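/- Suppose type θ has a type-independent utility U_θ(x,y,t) = f(x,y), all loser-best Nash equilibria of the θ-vs-θ game are efficient, and every efficient strategy pair (x̃,ỹ) has π(x̃,ỹ) ≠ π(ỹ,x̃). Define the mutant type τ by U_τ(x,y,τ) = π(x,y)+π(y,x) and U_τ(x,y,θ) = (π(x,y)+π(y,x))·1[π(x,y) ≥ π(y,x)]. Then in any Nash stable matching profile for (θ,τ,ε) under complete information: (a) any τ-τ matched pair plays an efficient strategy pair; (b) any τ-θ matched pair plays an efficient strategy pair (x*,y*) with π(x*,y*) ≥ π(y*,x*) where τ plays x*; and consequently (c) the average material payoff of type τ is at least (1/2)(π(x̃,ỹ)+π(ỹ,x̃)) ≥ the average material payoff of type θ. -/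

import Mathlib

noncomputable section
namespace Evo

open Finset

def IsMixed {X : Type*} [Fintype X] (x : X → ℝ) : Prop :=
  (∀ a, 0 ≤ x a) ∧ ∑ a, x a = 1

def payoff {X : Type*} [Fintype X] (p : X → X → ℝ) (x y : X → ℝ) : ℝ :=
  ∑ a, ∑ b, x a * y b * p a b

def totalPay {X : Type*} [Fintype X] (p : X → X → ℝ) (x y : X → ℝ) : ℝ :=
  payoff p x y + payoff p y x

def purePt {X : Type*} [DecidableEq X] (a : X) : X → ℝ := fun b => if b = a then 1 else 0

def NashEq {X : Type*} [Fintype X] (p : X → X → ℝ) (x y : X → ℝ) : Prop :=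
  IsMixed x ∧ IsMixed y ∧
    (∀ x', IsMixed x' → payoff p x' y ≤ payoff p x y) ∧
    (∀ y', IsMixed y' → payoff p y' x ≤ payoff p y x)

def Efficient {X : Type*} [Fintype X] (p : X → X → ℝ) (x y : X → ℝ) : Prop :=
  IsMixed x ∧ IsMixed y ∧
    ∀ x' y', IsMixed x' → IsMixed y' → totalPay p x' y' ≤ totalPay p x y

def LoserBest {X : Type*} [Fintype X] (p : X → X → ℝ) (x y : X → ℝ) : Prop :=
  NashEq p x y ∧ ∀ x' y', NashEq p x' y' →
    min (payoff p x' y') (payoff p y' x') ≤ min (payoff p x y) (payoff p y x)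

/-- The two preference types present in a population state. -/
inductive Ty : Type
  | θ | τ
deriving DecidableEq

/-- A matching profile (μ(ε), Σ) for a population state with fraction 1−ε of
type θ and ε of type τ, under complete information.  `μ a b` is the proportion
of type-a agents matched with type-b agents, and `σ a b` is the (pairwise
homogeneous) strategy pair played in such a match, where `(σ a b).1` is the
type-a agent's strategy. -/
structure MatchProfile (X : Type*) [Fintype X] where
  ε : ℝ
  μ : Ty → Ty → ℝ
  σ : Ty → Ty → ((X → ℝ) × (X → ℝ))
  hε0 : 0 < ε
  hε1 : ε < 1
  hμ0 : ∀ a b, 0 ≤ μ a b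
  hμθ : μ .θ .θ + μ .θ .τ = 1
  hμτ : μ .τ .τ + μ .τ .θ = 1
  hbal : (1 - ε) * μ .θ .τ = ε * μ .τ .θ
  hσ1 : ∀ a b, IsMixed (σ a b).1
  hσ2 : ∀ a b, IsMixed (σ a b).2
  hσsym1 : ∀ a b, (σ a b).1 = (σ b a).2
  hσsym2 : ∀ a b, (σ a b).2 = (σ b a).1

variable {X : Type*} [Fintype X]

/-- Internal stability: every matched pair plays a Nash equilibrium of the
subjective utility game between them.  `U a x y t` is the utility of a type-a
agent playing x against a type-t opponent playing y. -/
def InternallyStable (U : Ty → (X → ℝ) → (X → ℝ) → Ty → ℝ) (M : MatchProfile X) : Prop :=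
  ∀ a b : Ty, 0 < M.μ a b →
    (∀ x', IsMixed x' → U a x' (M.σ a b).2 b ≤ U a (M.σ a b).1 (M.σ a b).2 b) ∧
    (∀ y', IsMixed y' → U b y' (M.σ a b).1 a ≤ U b (M.σ a b).2 (M.σ a b).1 a)

/-- A blocking pair (Definition 1): positive-mass agents of types a and b
(currently matched to types c and d) agree on a Nash-equilibrium strategy pair
(x̂,ŷ) that makes both strictly better off. -/
def BlockingPair (U : Ty → (X → ℝ) → (X → ℝ) → Ty → ℝ) (M : MatchProfile X) : Prop :=
  ∃ (a b c d : Ty) (xh yh : X → ℝ),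
    IsMixed xh ∧ IsMixed yh ∧
    0 < M.μ a c ∧ 0 < M.μ b d ∧
    (∀ x', IsMixed x' → U a x' yh b ≤ U a xh yh b) ∧
    (∀ y', IsMixed y' → U b y' xh a ≤ U b yh xh a) ∧
    U a (M.σ a c).1 (M.σ a c).2 c < U a xh yh b ∧
    U b (M.σ b d).1 (M.σ b d).2 d < U b yh xh a

/-- Nash stability (Definition 2): internal and external stability. -/
def NashStable (U : Ty → (X → ℝ) → (X → ℝ) → Ty → ℝ) (M : MatchProfile X) : Prop :=
  InternallyStable U M ∧ ¬ BlockingPair U M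

/-- Average material payoff of type `a` (with `b` the other type), splitting
same-type asymmetric play equally. -/
def avgPay (p : X → X → ℝ) (M : MatchProfile X) (a b : Ty) : ℝ :=
  M.μ a a * ((payoff p (M.σ a a).1 (M.σ a a).2 + payoff p (M.σ a a).2 (M.σ a a).1) / 2)
    + M.μ a b * payoff p (M.σ a b).1 (M.σ a b).2

/-- Nash equilibrium of the θ-vs-θ game when θ's utility is the type-independent
function `f` (player 2's utility from (x,y) is `f y x`). -/
def NashEqF (f : (X → ℝ) → (X → ℝ) → ℝ) (x y : X → ℝ) : Prop :=
  IsMixed x ∧ IsMixed y ∧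
    (∀ x', IsMixed x' → f x' y ≤ f x y) ∧
    (∀ y', IsMixed y' → f y' x ≤ f y x)

/-- Loser-best Nash equilibrium of the θ-vs-θ game with utility `f`. -/
def LoserBestF (f : (X → ℝ) → (X → ℝ) → ℝ) (x y : X → ℝ) : Prop :=
  NashEqF f x y ∧ ∀ x' y', NashEqF f x' y' →
    min (f x' y') (f y' x') ≤ min (f x y) (f y x)

/-!
A τ-agent and another τ-agent can always agree on an efficient pair `(x̂, ŷ)`: it is a Nash
equilibrium of the common-interest game `totalPay`, and it gives both of them the efficient total
`V > 0`. So external stability forces every τ-agent to earn subjective utility at least `V`.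
Against τ this means its match is efficient; against θ the indicator in `U_τ(·, ·, θ)` must be `1`
(since `V > 0`) and the match is efficient with τ on the larger side. Hence τ earns at least `V / 2`
in every match, while θ earns at most `V / 2` in every match: in θ-θ matches because the split is
averaged, and in θ-τ matches because they are the τ-θ matches seen from the other side.
-/

section Payoffs

lemma totalPay_comm (p : X → X → ℝ) (x y : X → ℝ) : totalPay p x y = totalPay p y x :=
  add_comm _ _

variable {p : X → X → ℝ}

lemma IsMixed.exists_pos {x : X → ℝ} (hx : IsMixed x) : ∃ a, 0 < x a := by
  have h : ∑ _a : X, (0 : ℝ) < ∑ a, x a := by simp [hx.2]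
  obtain ⟨a, -, ha⟩ := Finset.exists_lt_of_sum_lt h
  exact ⟨a, ha⟩

lemma payoff_pos (hp : ∀ s t : X, 0 < p s t) {x y : X → ℝ} (hx : IsMixed x) (hy : IsMixed y) :
    0 < payoff p x y := by
  obtain ⟨a, ha⟩ := hx.exists_pos
  obtain ⟨b, hb⟩ := hy.exists_pos
  have hnonneg : ∀ a b, 0 ≤ x a * y b * p a b := fun a b =>
    mul_nonneg (mul_nonneg (hx.1 a) (hy.1 b)) (hp a b).le
  refine Finset.sum_pos' (fun i _ => Finset.sum_nonneg fun j _ => hnonneg i j) ⟨a, mem_univ a, ?_⟩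
  exact Finset.sum_pos' (fun j _ => hnonneg a j) ⟨b, mem_univ b, mul_pos (mul_pos ha hb) (hp a b)⟩

lemma totalPay_pos (hp : ∀ s t : X, 0 < p s t) {x y : X → ℝ} (hx : IsMixed x) (hy : IsMixed y) :
    0 < totalPay p x y :=
  add_pos (payoff_pos hp hx hy) (payoff_pos hp hy hx)

lemma half_totalPay_le_payoff {x y : X → ℝ} (h : payoff p y x ≤ payoff p x y) :
    totalPay p x y / 2 ≤ payoff p x y := by
  unfold totalPay; linarith

lemma payoff_le_half_totalPay {x y : X → ℝ} (h : payoff p y x ≤ payoff p x y) :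
    payoff p y x ≤ totalPay p x y / 2 := by
  unfold totalPay; linarith

end Payoffs

section Efficiency

lemma exists_efficient (p : X → X → ℝ) {z : X → ℝ} (hz : IsMixed z) :
    ∃ x y, Efficient p x y := by
  have hcompact : IsCompact (stdSimplex ℝ X ×ˢ stdSimplex ℝ X) :=
    (isCompact_stdSimplex ℝ X).prod (isCompact_stdSimplex ℝ X)
  have hcont : Continuous fun q : (X → ℝ) × (X → ℝ) => totalPay p q.1 q.2 := by
    unfold totalPay payoff; fun_prop
  obtain ⟨q, hq, hmax⟩ := hcompact.exists_isMaxOn ⟨(z, z), hz, hz⟩ hcont.continuousOn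
  exact ⟨q.1, q.2, hq.1, hq.2, fun x' y' hx' hy' => hmax (Set.mk_mem_prod hx' hy')⟩

variable {p : X → X → ℝ}

lemma Efficient.swap {x y : X → ℝ} (h : Efficient p x y) : Efficient p y x :=
  ⟨h.2.1, h.1, fun x' y' hx' hy' => by
    rw [totalPay_comm p y]; exact h.2.2 x' y' hx' hy'⟩

lemma Efficient.totalPay_eq {x y x' y' : X → ℝ} (h : Efficient p x y) (h' : Efficient p x' y') :
    totalPay p x y = totalPay p x' y' :=
  le_antisymm (h'.2.2 x y h.1 h.2.1) (h.2.2 x' y' h'.1 h'.2.1)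

lemma efficient_of_le {x y xe ye : X → ℝ} (hx : IsMixed x) (hy : IsMixed y)
    (he : Efficient p xe ye) (hle : totalPay p xe ye ≤ totalPay p x y) : Efficient p x y :=
  ⟨hx, hy, fun x' y' hx' hy' => (he.2.2 x' y' hx' hy').trans hle⟩

end Efficiency

section Stability

lemma MatchProfile.μ_τθ_pos_of_μ_θτ_pos (M : MatchProfile X) (h : 0 < M.μ .θ .τ) :
    0 < M.μ .τ .θ := by
  have hprod : 0 < M.ε * M.μ .τ .θ := M.hbal ▸ mul_pos (sub_pos.2 M.hε1) h
  exact pos_of_mul_pos_right hprod M.hε0.le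

variable {U : Ty → (X → ℝ) → (X → ℝ) → Ty → ℝ} {M : MatchProfile X}

lemma min_utility_le_of_not_blockingPair (hblock : ¬ BlockingPair U M) {a c : Ty}
    (hc : 0 < M.μ a c) {xh yh : X → ℝ} (hx : IsMixed xh) (hy : IsMixed yh)
    (hbr₁ : ∀ x', IsMixed x' → U a x' yh a ≤ U a xh yh a)
    (hbr₂ : ∀ y', IsMixed y' → U a y' xh a ≤ U a yh xh a) :
    min (U a xh yh a) (U a yh xh a) ≤ U a (M.σ a c).1 (M.σ a c).2 c := by
  by_contra! h
  rw [lt_min_iff] at h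
  exact hblock ⟨a, a, c, c, xh, yh, hx, hy, hc, hc, hbr₁, hbr₂, h.1, h.2⟩

end Stability

section AveragePayoff

variable {p : X → X → ℝ} {M : MatchProfile X} {a b : Ty} {v : ℝ}

lemma mul_le_mul_of_nonneg_of_pos_imp {μ s t : ℝ} (hμ : 0 ≤ μ) (h : 0 < μ → s ≤ t) :
    μ * s ≤ μ * t := by
  rcases hμ.eq_or_lt with rfl | hpos
  · simp
  · exact mul_le_mul_of_nonneg_left (h hpos) hμ

lemma half_le_avgPay (hμ : M.μ a a + M.μ a b = 1)
    (haa : 0 < M.μ a a → v ≤ totalPay p (M.σ a a).1 (M.σ a a).2)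
    (hab : 0 < M.μ a b → v / 2 ≤ payoff p (M.σ a b).1 (M.σ a b).2) :
    v / 2 ≤ avgPay p M a b :=
  calc v / 2 = M.μ a a * (v / 2) + M.μ a b * (v / 2) := by rw [← add_mul, hμ, one_mul]
    _ ≤ avgPay p M a b :=
      add_le_add
        (mul_le_mul_of_nonneg_of_pos_imp (M.hμ0 a a) fun h => by
          have := haa h; unfold totalPay at this; linarith)
        (mul_le_mul_of_nonneg_of_pos_imp (M.hμ0 a b) hab)

lemma avgPay_le_half (hμ : M.μ a a + M.μ a b = 1)
    (haa : 0 < M.μ a a → totalPay p (M.σ a a).1 (M.σ a a).2 ≤ v)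
    (hab : 0 < M.μ a b → payoff p (M.σ a b).1 (M.σ a b).2 ≤ v / 2) :
    avgPay p M a b ≤ v / 2 :=
  calc avgPay p M a b ≤ M.μ a a * (v / 2) + M.μ a b * (v / 2) :=
      add_le_add
        (mul_le_mul_of_nonneg_of_pos_imp (M.hμ0 a a) fun h => by
          have := haa h; unfold totalPay at this; linarith)
        (mul_le_mul_of_nonneg_of_pos_imp (M.hμ0 a b) hab)
    _ = v / 2 := by rw [← add_mul, hμ, one_mul]

end AveragePayoff

open Classical in
theorem mutant_dominates_type_independent_general
    (p : X → X → ℝ) (hp : ∀ s t : X, 0 < p s t)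
    (U : Ty → (X → ℝ) → (X → ℝ) → Ty → ℝ)
    (hUττ : ∀ x y, U .τ x y .τ = totalPay p x y)
    (hUτθ : ∀ x y, U .τ x y .θ =
      totalPay p x y * (if payoff p y x ≤ payoff p x y then 1 else 0))
    (M : MatchProfile X) (hstable : NashStable U M) :
    (0 < M.μ .τ .τ → Efficient p (M.σ .τ .τ).1 (M.σ .τ .τ).2) ∧
    (0 < M.μ .τ .θ → Efficient p (M.σ .τ .θ).1 (M.σ .τ .θ).2 ∧
      payoff p (M.σ .τ .θ).2 (M.σ .τ .θ).1 ≤ payoff p (M.σ .τ .θ).1 (M.σ .τ .θ).2) ∧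
    (∀ xt yt, Efficient p xt yt →
      totalPay p xt yt / 2 ≤ avgPay p M .τ .θ ∧
      avgPay p M .θ .τ ≤ totalPay p xt yt / 2) := by
  obtain ⟨xe, ye, he⟩ := exists_efficient p (M.hσ1 .τ .τ)
  have hV : 0 < totalPay p xe ye := totalPay_pos hp he.1 he.2.1
  have hτ : ∀ c, 0 < M.μ .τ c → totalPay p xe ye ≤ U .τ (M.σ .τ c).1 (M.σ .τ c).2 c := by
    intro c hc
    have h := min_utility_le_of_not_blockingPair hstable.2 hc he.1 he.2.1
      (fun x' hx' => by simpa only [hUττ] using he.2.2 x' ye hx' he.2.1)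
      (fun y' hy' => by simpa only [hUττ] using he.swap.2.2 y' xe hy' he.1)
    rwa [hUττ, hUττ, totalPay_comm p ye, min_self] at h
  have hττ : 0 < M.μ .τ .τ → Efficient p (M.σ .τ .τ).1 (M.σ .τ .τ).2 := fun h =>
    efficient_of_le (M.hσ1 _ _) (M.hσ2 _ _) he ((hτ .τ h).trans_eq (hUττ _ _))
  have hτθ : 0 < M.μ .τ .θ → Efficient p (M.σ .τ .θ).1 (M.σ .τ .θ).2 ∧
      payoff p (M.σ .τ .θ).2 (M.σ .τ .θ).1 ≤ payoff p (M.σ .τ .θ).1 (M.σ .τ .θ).2 := by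
    intro h
    have hle := hτ .θ h
    rw [hUτθ] at hle
    split_ifs at hle with hord
    · exact ⟨efficient_of_le (M.hσ1 _ _) (M.hσ2 _ _) he (hle.trans_eq (mul_one _)), hord⟩
    · exact absurd (hle.trans_eq (mul_zero _)) hV.not_ge
  refine ⟨hττ, hτθ, fun xt yt ht => ?_⟩
  rw [ht.totalPay_eq he]
  refine ⟨half_le_avgPay M.hμτ (fun h => (hτ .τ h).trans_eq (hUττ _ _)) fun h => ?_,
    avgPay_le_half M.hμθ (fun _ => he.2.2 _ _ (M.hσ1 _ _) (M.hσ2 _ _)) fun h => ?_⟩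
  · obtain ⟨heff, hord⟩ := hτθ h
    rw [← heff.totalPay_eq he]
    exact half_totalPay_le_payoff hord
  · obtain ⟨heff, hord⟩ := hτθ (M.μ_τθ_pos_of_μ_θτ_pos h)
    rw [M.hσsym1 .θ .τ, M.hσsym2 .θ .τ, ← heff.totalPay_eq he]
    exact payoff_le_half_totalPay hord

open Classical in
/-- core of the proof of Proposition 2(ii): with θ a
type-independent type `f` whose loser-best same-type equilibria are all
efficient, all efficient pairs asymmetric in π, and the mutant τ defined by
U_τ(x,y,τ) = π(x,y)+π(y,x) and U_τ(x,y,θ) = (π(x,y)+π(y,x))·1[π(x,y) ≥ π(y,x)],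
in any Nash stable matching profile: (a) matched τ-τ pairs play efficiently,
(b) matched τ-θ pairs play an efficient pair with τ on the weakly advantageous
side, and (c) τ's average material payoff is at least half the efficient total,
which is at least θ's average material payoff. -/
theorem mutant_dominates_type_independent
    (p : X → X → ℝ) (hp : ∀ s t : X, 0 < p s t)
    (f : (X → ℝ) → (X → ℝ) → ℝ)
    (hLB : ∀ x y, LoserBestF f x y → Efficient p x y)
    (hasym : ∀ x y, Efficient p x y → payoff p x y ≠ payoff p y x)
    (U : Ty → (X → ℝ) → (X → ℝ) → Ty → ℝ)
    (hUθ : ∀ x y t, U .θ x y t = f x y)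
    (hUττ : ∀ x y, U .τ x y .τ = totalPay p x y)
    (hUτθ : ∀ x y, U .τ x y .θ =
      totalPay p x y * (if payoff p y x ≤ payoff p x y then 1 else 0))
    (M : MatchProfile X) (hstable : NashStable U M) :
    (0 < M.μ .τ .τ → Efficient p (M.σ .τ .τ).1 (M.σ .τ .τ).2) ∧
    (0 < M.μ .τ .θ → Efficient p (M.σ .τ .θ).1 (M.σ .τ .θ).2 ∧
      payoff p (M.σ .τ .θ).2 (M.σ .τ .θ).1 ≤ payoff p (M.σ .τ .θ).1 (M.σ .τ .θ).2) ∧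
    (∀ xt yt, Efficient p xt yt →
      totalPay p xt yt / 2 ≤ avgPay p M .τ .θ ∧
      avgPay p M .θ .τ ≤ totalPay p xt yt / 2) :=
  mutant_dominates_type_independent_general p hp U hUττ hUτθ M hstable

end Evo
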